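/- Let n ∈ ℕ, c > 0, and let u, v ∈ ℝⁿ be nonzero vectors with c‖u‖² < 1 and c‖v‖² < 1. Then equality ⟨log₀(u), log₀(v)⟩ = ½·(d(0,u)² + d(0,v)² − d(u,v)²) holds if and only if u and v are linearly dependent, i.e. if and only if the angle β between u and v satisfies cos β = ±1 (equivalently, v = t·u for some nonzero real t). -/

import Mathlib

open Real
open scoped Classical

/-- Real inverse hyperbolic tangent. -/
noncomputable def artanh (x : ℝ) : ℝ := (1 / 2) * Real.log ((1 + x) / (1 - x))

/-- Möbius addition on the Poincaré ball of curvature `c`. -/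
noncomputable def mobiusAdd {n : ℕ} (c : ℝ) (u v : EuclideanSpace ℝ (Fin n)) :
    EuclideanSpace ℝ (Fin n) :=
  (1 + 2 * c * (inner ℝ u v : ℝ) + c ^ 2 * ‖u‖ ^ 2 * ‖v‖ ^ 2)⁻¹ •
    ((1 + 2 * c * (inner ℝ u v : ℝ) + c * ‖v‖ ^ 2) • u + (1 - c * ‖u‖ ^ 2) • v)

/-- Logarithmic map at the origin of the Poincaré ball of curvature `c`. -/
noncomputable def plog {n : ℕ} (c : ℝ) (v : EuclideanSpace ℝ (Fin n)) :
    EuclideanSpace ℝ (Fin n) :=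
  if v = 0 then 0 else (_root_.artanh (Real.sqrt c * ‖v‖) / (Real.sqrt c * ‖v‖)) • v

/-- Exponential map at the origin of the Poincaré ball of curvature `c`. -/
noncomputable def pexp {n : ℕ} (c : ℝ) (x : EuclideanSpace ℝ (Fin n)) :
    EuclideanSpace ℝ (Fin n) :=
  if x = 0 then 0 else (Real.tanh (Real.sqrt c * ‖x‖) / (Real.sqrt c * ‖x‖)) • x

/-- The (rescaled) Poincaré distance of curvature `c`. -/
noncomputable def pdist {n : ℕ} (c : ℝ) (u v : EuclideanSpace ℝ (Fin n)) : ℝ :=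
  (1 / Real.sqrt c) * _root_.artanh (Real.sqrt c * ‖mobiusAdd c (-u) v‖)


/-! Put `a = 2√c·d(0,u)`, `b = 2√c·d(0,v)`, `d = 2√c·d(u,v)`, `λ = (1 + cos β)/2` and
`μ = (1 - cos β)/2`. The Poincaré ball obeys the hyperbolic law of cosines
`cosh d = cosh a cosh b - cos β sinh a sinh b = λ cosh (a - b) + μ cosh (a + b)`, while, since
`⟪log₀ u, log₀ v⟫ = d(0,u) d(0,v) cos β`, the equality in question is the Euclidean law of cosines
`d² = a² + b² - 2ab cos β = λ (a - b)² + μ (a + b)²`. Together they say that `s ↦ cosh √s` takes,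
at the `(λ, μ)`-average of `(a - b)²` and `(a + b)²`, the average of its values there; strict
convexity of this function forces `λ μ = 0`, i.e. `cos β = ±1`. Conversely, for `cos β = ±1` the
hyperbolic law reads `cosh d = cosh (a ∓ b)`, so `d = |a ∓ b|`. -/
open Set InnerProductGeometry
open scoped RealInnerProductSpace

theorem artanh_eq_real_artanh {x : ℝ} (hx : x ∈ Icc (-1) 1) :
    _root_.artanh x = Real.artanh x :=
  (Real.artanh_eq_half_log hx).symm

theorem cosh_two_mul_artanh {x : ℝ} (hx : x ∈ Ioo (-1) 1) :
    cosh (2 * Real.artanh x) = (1 + x ^ 2) / (1 - x ^ 2) := by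
  have h : 0 < 1 - x ^ 2 := by nlinarith [hx.1, hx.2]
  rw [cosh_two_mul, cosh_artanh hx, sinh_artanh hx, div_pow, div_pow, sq_sqrt h.le]
  field_simp

theorem sinh_two_mul_artanh {x : ℝ} (hx : x ∈ Ioo (-1) 1) :
    sinh (2 * Real.artanh x) = 2 * x / (1 - x ^ 2) := by
  have h : 0 < 1 - x ^ 2 := by nlinarith [hx.1, hx.2]
  rw [sinh_two_mul, cosh_artanh hx, sinh_artanh hx]
  field_simp
  rw [sq_sqrt h.le]

theorem strictConvexOn_sinh : StrictConvexOn ℝ (Ici 0) sinh :=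
  StrictMonoOn.strictConvexOn_of_deriv (convex_Ici 0) continuous_sinh.continuousOn
    (by rw [Real.deriv_sinh, interior_Ici]; exact cosh_strictMonoOn.mono Ioi_subset_Ici_self)

theorem strictMonoOn_sinh_div_self : StrictMonoOn (fun t => sinh t / t) (Ioi 0) := by
  intro s hs t ht hst
  simpa using strictConvexOn_sinh.secant_strict_mono (a := 0) self_mem_Ici
    (mem_Ici.2 hs.le) (mem_Ici.2 ht.le) hs.ne' ht.ne' hst

theorem strictConvexOn_cosh_sqrt : StrictConvexOn ℝ (Ici 0) (fun s => cosh √s) := by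
  refine StrictMonoOn.strictConvexOn_of_deriv (convex_Ici 0) (by fun_prop) ?_
  rw [interior_Ici]
  have hderiv : EqOn (fun s => sinh √s / √s / 2) (deriv fun s => cosh √s) (Ioi 0) :=
    fun s hs => by
      rw [((hasDerivAt_sqrt (ne_of_gt hs)).cosh).deriv]
      field_simp
  refine StrictMonoOn.congr (fun s hs t ht hst => ?_) hderiv
  have := strictMonoOn_sinh_div_self (sqrt_pos.2 hs) (sqrt_pos.2 ht) (sqrt_lt_sqrt (le_of_lt hs) hst)
  simp only at this ⊢
  linarith

theorem sq_eq_sq_of_cosh_eq {x y : ℝ} (h : cosh x = cosh y) : x ^ 2 = y ^ 2 :=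
  sq_eq_sq_iff_abs_eq_abs _ _ |>.2 <| le_antisymm (cosh_le_cosh.1 h.le) (cosh_le_cosh.1 h.ge)

theorem euclidean_law_of_cosines_iff_of_cosh_eq {k a b d γ : ℝ} (hk : k ≠ 0) (hab : a * b ≠ 0)
    (hγ : |γ| ≤ 1)
    (hcosh : cosh (k * d) = cosh (k * a) * cosh (k * b) - γ * (sinh (k * a) * sinh (k * b))) :
    a * b * γ = 1 / 2 * (a ^ 2 + b ^ 2 - d ^ 2) ↔ |γ| = 1 := by
  constructor
  · intro hd
    by_contra hγ1
    obtain ⟨hγ₁, hγ₂⟩ := abs_lt.1 (lt_of_le_of_ne hγ hγ1)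
    have hne : (k * (a - b)) ^ 2 ≠ (k * (a + b)) ^ 2 := by
      intro h
      exact mul_ne_zero (pow_ne_zero 2 hk) hab (by linear_combination -h / 4)
    have key := strictConvexOn_cosh_sqrt.2 (sq_nonneg (k * (a - b))) (sq_nonneg (k * (a + b))) hne
      (by linarith : 0 < (1 + γ) / 2) (by linarith : 0 < (1 - γ) / 2) (by ring)
    simp only [smul_eq_mul, sqrt_sq_eq_abs, cosh_abs] at key
    rw [show (1 + γ) / 2 * (k * (a - b)) ^ 2 + (1 - γ) / 2 * (k * (a + b)) ^ 2 = (k * d) ^ 2 by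
      linear_combination (-2 * k ^ 2) * hd, sqrt_sq_eq_abs, cosh_abs, hcosh, mul_sub, mul_add,
      cosh_sub, cosh_add] at key
    linarith
  · intro h
    have hk2 : k ^ 2 ≠ 0 := pow_ne_zero 2 hk
    rcases abs_eq zero_le_one |>.1 h with rfl | rfl
    · have hsq := sq_eq_sq_of_cosh_eq (y := k * (a - b)) (by rw [hcosh, mul_sub, cosh_sub]; ring)
      have : k ^ 2 * d ^ 2 = k ^ 2 * (a - b) ^ 2 := by linear_combination hsq
      linear_combination (mul_left_cancel₀ hk2 this) / 2
    · have hsq := sq_eq_sq_of_cosh_eq (y := k * (a + b)) (by rw [hcosh, mul_add, cosh_add]; ring)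
      have : k ^ 2 * d ^ 2 = k ^ 2 * (a + b) ^ 2 := by linear_combination hsq
      linear_combination (mul_left_cancel₀ hk2 this) / 2

section PoincareBall

variable {n : ℕ} {c : ℝ} {u v : EuclideanSpace ℝ (Fin n)}

theorem norm_mobiusAdd_sq (c : ℝ) (u v : EuclideanSpace ℝ (Fin n)) :
    ‖mobiusAdd c u v‖ ^ 2 = ‖u + v‖ ^ 2 / (1 + 2 * c * ⟪u, v⟫ + c ^ 2 * ‖u‖ ^ 2 * ‖v‖ ^ 2) := by
  rw [mobiusAdd]
  set D := 1 + 2 * c * ⟪u, v⟫ + c ^ 2 * ‖u‖ ^ 2 * ‖v‖ ^ 2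
  have hnum : ‖(1 + 2 * c * ⟪u, v⟫ + c * ‖v‖ ^ 2) • u + (1 - c * ‖u‖ ^ 2) • v‖ ^ 2
      = D * ‖u + v‖ ^ 2 := by
    simp only [norm_add_sq_real, norm_smul, real_inner_smul_left, real_inner_smul_right,
      Real.norm_eq_abs, mul_pow, sq_abs, D]
    ring
  rw [norm_smul, mul_pow, hnum, Real.norm_eq_abs, sq_abs]
  rcases eq_or_ne D 0 with hD | hD
  · simp [hD]
  · field_simp

theorem mul_norm_mobiusAdd_neg_sq (c : ℝ) (u v : EuclideanSpace ℝ (Fin n)) :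
    c * ‖mobiusAdd c (-u) v‖ ^ 2 =
      c * ‖u - v‖ ^ 2 / ((1 - c * ‖u‖ ^ 2) * (1 - c * ‖v‖ ^ 2) + c * ‖u - v‖ ^ 2) := by
  have hden : 1 + 2 * c * ⟪-u, v⟫ + c ^ 2 * ‖-u‖ ^ 2 * ‖v‖ ^ 2
      = (1 - c * ‖u‖ ^ 2) * (1 - c * ‖v‖ ^ 2) + c * ‖u - v‖ ^ 2 := by
    rw [norm_sub_sq_real, inner_neg_left, norm_neg]
    ring
  rw [norm_mobiusAdd_sq, hden, neg_add_eq_sub, norm_sub_rev, mul_div_assoc]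

theorem mobiusAdd_zero_left (c : ℝ) (v : EuclideanSpace ℝ (Fin n)) : mobiusAdd c 0 v = v := by
  simp [mobiusAdd]

theorem pdist_zero_left (c : ℝ) (v : EuclideanSpace ℝ (Fin n)) :
    pdist c 0 v = 1 / √c * _root_.artanh (√c * ‖v‖) := by
  simp [pdist, mobiusAdd_zero_left]

theorem inner_plog_plog (c : ℝ) (u v : EuclideanSpace ℝ (Fin n)) :
    ⟪plog c u, plog c v⟫ = pdist c 0 u * pdist c 0 v * Real.cos (angle u v) := by
  rcases eq_or_ne u 0 with rfl | hu0
  · simp [plog, pdist_zero_left]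
  rcases eq_or_ne v 0 with rfl | hv0
  · simp [plog, pdist_zero_left]
  rw [plog, plog, if_neg hu0, if_neg hv0, real_inner_smul_left, real_inner_smul_right,
    ← cos_angle_mul_norm_mul_norm, pdist_zero_left, pdist_zero_left]
  have := norm_ne_zero_iff.2 hu0
  have := norm_ne_zero_iff.2 hv0
  field_simp

theorem sqrt_mul_norm_mem_Ioo (hc : 0 ≤ c) (hv : c * ‖v‖ ^ 2 < 1) : √c * ‖v‖ ∈ Ioo (-1) 1 := by
  rwa [mem_Ioo, ← abs_lt, ← sq_lt_one_iff_abs_lt_one, mul_pow, sq_sqrt hc]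

theorem two_mul_sqrt_mul_pdist (hc : 0 < c) :
    2 * √c * pdist c u v = 2 * _root_.artanh (√c * ‖mobiusAdd c (-u) v‖) := by
  rw [pdist, ← mul_assoc, mul_assoc 2, mul_one_div_cancel (sqrt_ne_zero'.2 hc), mul_one]

theorem cosh_two_mul_sqrt_mul_pdist (hc : 0 < c) (hu : c * ‖u‖ ^ 2 < 1) (hv : c * ‖v‖ ^ 2 < 1) :
    cosh (2 * √c * pdist c u v) =
      1 + 2 * (c * ‖u - v‖ ^ 2) / ((1 - c * ‖u‖ ^ 2) * (1 - c * ‖v‖ ^ 2)) := by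
  set r := √c * ‖mobiusAdd c (-u) v‖
  set q := c * ‖u - v‖ ^ 2
  set P := (1 - c * ‖u‖ ^ 2) * (1 - c * ‖v‖ ^ 2)
  have hP : 0 < P := mul_pos (by linarith) (by linarith)
  have hPq : 0 < P + q := by positivity
  have hr2 : r ^ 2 = q / (P + q) := by
    rw [mul_pow, sq_sqrt hc.le, mul_norm_mobiusAdd_neg_sq]
  have hr : r ∈ Ioo (-1) 1 := by
    rw [mem_Ioo, ← abs_lt, ← sq_lt_one_iff_abs_lt_one, hr2, div_lt_one hPq]
    linarith
  have hsub : 1 - r ^ 2 = P / (P + q) := by rw [hr2]; field_simp; ring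
  have hadd : 1 + r ^ 2 = (P + 2 * q) / (P + q) := by rw [hr2]; field_simp; ring
  rw [two_mul_sqrt_mul_pdist hc, artanh_eq_real_artanh (Ioo_subset_Icc_self hr),
    cosh_two_mul_artanh hr, hsub, hadd]
  field_simp

theorem sinh_two_mul_sqrt_mul_pdist_zero_left (hc : 0 < c) (hv : c * ‖v‖ ^ 2 < 1) :
    sinh (2 * √c * pdist c 0 v) = 2 * (√c * ‖v‖) / (1 - c * ‖v‖ ^ 2) := by
  have hv' := sqrt_mul_norm_mem_Ioo hc.le hv
  rw [two_mul_sqrt_mul_pdist hc, neg_zero, mobiusAdd_zero_left,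
    artanh_eq_real_artanh (Ioo_subset_Icc_self hv'), sinh_two_mul_artanh hv', mul_pow,
    sq_sqrt hc.le]

theorem pdist_zero_left_pos (hc : 0 < c) (hv0 : v ≠ 0) (hv : c * ‖v‖ ^ 2 < 1) :
    0 < pdist c 0 v := by
  have hv' := sqrt_mul_norm_mem_Ioo hc.le hv
  rw [pdist_zero_left, artanh_eq_real_artanh (Ioo_subset_Icc_self hv')]
  exact mul_pos (by positivity) (Real.artanh_pos ⟨by positivity, hv'.2⟩)

theorem cosh_two_mul_sqrt_mul_pdist_eq_law_of_cosines (hc : 0 < c) (hu : c * ‖u‖ ^ 2 < 1)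
    (hv : c * ‖v‖ ^ 2 < 1) :
    cosh (2 * √c * pdist c u v) =
      cosh (2 * √c * pdist c 0 u) * cosh (2 * √c * pdist c 0 v) -
        Real.cos (angle u v) * (sinh (2 * √c * pdist c 0 u) * sinh (2 * √c * pdist c 0 v)) := by
  have h0 : c * ‖(0 : EuclideanSpace ℝ (Fin n))‖ ^ 2 < 1 := by simp
  rw [cosh_two_mul_sqrt_mul_pdist hc hu hv, cosh_two_mul_sqrt_mul_pdist hc h0 hu,
    cosh_two_mul_sqrt_mul_pdist hc h0 hv, sinh_two_mul_sqrt_mul_pdist_zero_left hc hu,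
    sinh_two_mul_sqrt_mul_pdist_zero_left hc hv, norm_sub_sq_real, ← cos_angle_mul_norm_mul_norm]
  have : 0 < 1 - c * ‖u‖ ^ 2 := by linarith
  have : 0 < 1 - c * ‖v‖ ^ 2 := by linarith
  simp only [zero_sub, norm_neg, norm_zero]
  field_simp
  rw [sq_sqrt hc.le]
  ring

end PoincareBall

/-- Equality in Theorem 4.1's inequality holds iff `u` and `v` are linearly
dependent, i.e. `v = t • u` for some nonzero real `t` (equivalently `cos β = ±1`). -/
theorem projected_inner_eq_geodesic_inner_iff {n : ℕ} (c : ℝ) (hc : 0 < c)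
    (u v : EuclideanSpace ℝ (Fin n)) (hu0 : u ≠ 0) (hv0 : v ≠ 0)
    (hu : c * ‖u‖ ^ 2 < 1) (hv : c * ‖v‖ ^ 2 < 1) :
    (inner ℝ (plog c u) (plog c v) : ℝ) =
        (1 / 2) * (pdist c 0 u ^ 2 + pdist c 0 v ^ 2 - pdist c u v ^ 2) ↔
      ∃ t : ℝ, t ≠ 0 ∧ v = t • u := by
  have hdep : |Real.cos (angle u v)| = 1 ↔ ∃ t : ℝ, t ≠ 0 ∧ v = t • u := by
    rw [cos_angle, abs_real_inner_div_norm_mul_norm_eq_one_iff, and_iff_right hu0]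
  rw [inner_plog_plog, ← hdep]
  exact euclidean_law_of_cosines_iff_of_cosh_eq (by positivity)
    (mul_pos (pdist_zero_left_pos hc hu0 hu) (pdist_zero_left_pos hc hv0 hv)).ne' (abs_cos_le_one _)
    (cosh_two_mul_sqrt_mul_pdist_eq_law_of_cosines hc hu hv)
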